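/- Let n ≥ 1, m = n + 2, and let f : EuclideanSpace ℝ (Fin m) → ℝ be smooth (or at least C²). Then for every x: (1/2) Σ_{i,j} ε i * ε j * (X_{ij}(X_{ij} f))(x) = Q(x)·(□f)(x) − n·(E f)(x) − (E (E f))(x), where X_{ij}(X_{ij} f) means X_{ij} applied to the function y ↦ (X_{ij} f)(y). (This is the quadratic Casimir identity C = (x,x)∂^i∂_i − n x^i∂_i − (x^i∂_i)².) -/

import Mathlib

open Finset

/-- The Minkowski signature factor: `ε 0 = 1`, `ε i = −1` for `i ≠ 0`. -/
noncomputable def eps {n : ℕ} (i : Fin (n + 2)) : ℝ := if i = 0 then 1 else -1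

/-- The partial derivative `∂_i f(x) = fderiv ℝ f x (Pi.single i 1)`. -/
noncomputable def pd {n : ℕ} (f : EuclideanSpace ℝ (Fin (n + 2)) → ℝ) (i : Fin (n + 2)) :
    EuclideanSpace ℝ (Fin (n + 2)) → ℝ :=
  fun x => fderiv ℝ f x (WithLp.toLp 2 (Pi.single i (1 : ℝ)))

/-- The rotation generator `(X_{ij} f)(x) = (ε i * x i) ∂_j f(x) − (ε j * x j) ∂_i f(x)`. -/
noncomputable def Xop {n : ℕ} (i j : Fin (n + 2))
    (f : EuclideanSpace ℝ (Fin (n + 2)) → ℝ) :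
    EuclideanSpace ℝ (Fin (n + 2)) → ℝ :=
  fun x => (eps i * x i) * pd f j x - (eps j * x j) * pd f i x

/-- The Euler operator `(E f)(x) = Σ_i x i * ∂_i f(x)`. -/
noncomputable def euler {n : ℕ} (f : EuclideanSpace ℝ (Fin (n + 2)) → ℝ) :
    EuclideanSpace ℝ (Fin (n + 2)) → ℝ :=
  fun x => ∑ i, x i * pd f i x

/-- The Minkowski wave operator `(□f)(x) = Σ_i ε i * ∂_i(∂_i f)(x)`. -/
noncomputable def box {n : ℕ} (f : EuclideanSpace ℝ (Fin (n + 2)) → ℝ) :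
    EuclideanSpace ℝ (Fin (n + 2)) → ℝ :=
  fun x => ∑ i, eps i * pd (pd f i) i x

/-- The Minkowski quadratic form `Q(x) = Σ_i ε i * (x i)²`. -/
noncomputable def Qform {n : ℕ} (x : EuclideanSpace ℝ (Fin (n + 2))) : ℝ :=
  ∑ i, eps i * (x i) ^ 2

/-
Each generator `X_{ij}` is a first-order operator with linear coefficients, so `X_{ij} X_{ij} f`
is computed by the product rule. Once the mixed second partials are identified (Schwarz), half
the weighted double sum is `Q(x) □f - (n + 1) E f - Σ_{ij} x_i x_j ∂_i ∂_j f`, and the Hessian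
form in the last term is exactly `E (E f) - E f`.
-/

section PartialDerivatives

variable {n : ℕ} {g h : EuclideanSpace ℝ (Fin (n + 2)) → ℝ} {x : EuclideanSpace ℝ (Fin (n + 2))}

lemma pd_sub (hg : DifferentiableAt ℝ g x) (hh : DifferentiableAt ℝ h x) (k : Fin (n + 2)) :
    pd (fun y => g y - h y) k x = pd g k x - pd h k x := by
  simp only [pd, fderiv_fun_sub hg hh, sub_apply]

lemma pd_mul (hg : DifferentiableAt ℝ g x) (hh : DifferentiableAt ℝ h x) (k : Fin (n + 2)) :
    pd (fun y => g y * h y) k x = pd g k x * h x + g x * pd h k x := by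
  simp only [pd, fderiv_fun_mul hg hh, add_apply, smul_apply, smul_eq_mul]
  ring

lemma pd_sum {ι : Type*} (s : Finset ι) {g : ι → EuclideanSpace ℝ (Fin (n + 2)) → ℝ}
    (hg : ∀ i ∈ s, DifferentiableAt ℝ (g i) x) (k : Fin (n + 2)) :
    pd (fun y => ∑ i ∈ s, g i y) k x = ∑ i ∈ s, pd (g i) k x := by
  simp only [pd, fderiv_fun_sum hg, _root_.sum_apply]

lemma pd_const_mul (hg : DifferentiableAt ℝ g x) (c : ℝ) (k : Fin (n + 2)) :
    pd (fun y => c * g y) k x = c * pd g k x := by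
  simp only [pd, fderiv_const_mul hg, smul_apply, smul_eq_mul]

lemma pd_coord (i k : Fin (n + 2)) :
    pd (fun y : EuclideanSpace ℝ (Fin (n + 2)) => y i) k x = if i = k then 1 else 0 := by
  have : HasFDerivAt (fun y : EuclideanSpace ℝ (Fin (n + 2)) => y i)
      (EuclideanSpace.proj (𝕜 := ℝ) i) x :=
    (EuclideanSpace.proj (𝕜 := ℝ) i).hasFDerivAt
  simp [pd, this.fderiv]

lemma ContDiff.differentiable_pd (hg : ContDiff ℝ 2 g) (k : Fin (n + 2)) :
    Differentiable ℝ (pd g k) :=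
  ((hg.fderiv_right (m := 1) (by norm_num)).differentiable one_ne_zero).clm_apply
    (differentiable_const _)

lemma ContDiff.pd_pd_comm (hg : ContDiff ℝ 2 g) (i j : Fin (n + 2)) :
    pd (pd g i) j x = pd (pd g j) i x := by
  have hd : DifferentiableAt ℝ (fderiv ℝ g) x :=
    (hg.fderiv_right (m := 1) (by norm_num)).differentiable one_ne_zero x
  have hsecond : ∀ u v : Fin (n + 2), pd (pd g v) u x =
      fderiv ℝ (fderiv ℝ g) x (WithLp.toLp 2 (Pi.single u 1)) (WithLp.toLp 2 (Pi.single v 1)) := by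
    intro u v
    unfold pd
    rw [fderiv_clm_apply hd (differentiableAt_const _)]
    simp
  rw [hsecond, hsecond]
  exact hg.contDiffAt.isSymmSndFDerivAt (by simp) _ _

end PartialDerivatives

section Operators

variable {n : ℕ} {f : EuclideanSpace ℝ (Fin (n + 2)) → ℝ} {x : EuclideanSpace ℝ (Fin (n + 2))}

lemma eps_eq_one_or_neg_one (i : Fin (n + 2)) : eps i = 1 ∨ eps i = -1 := by
  unfold eps; split_ifs <;> simp

lemma pd_Xop (hf : ContDiff ℝ 2 f) (i j k : Fin (n + 2)) :
    pd (Xop i j f) k x =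
      eps i * (if i = k then 1 else 0) * pd f j x + eps i * x i * pd (pd f j) k x
        - (eps j * (if j = k then 1 else 0) * pd f i x + eps j * x j * pd (pd f i) k x) := by
  have := hf.differentiable_pd i
  have := hf.differentiable_pd j
  unfold Xop
  rw [pd_sub (by fun_prop) (by fun_prop),
    pd_mul (g := fun y => eps i * y i) (by fun_prop) (by fun_prop),
    pd_mul (g := fun y => eps j * y j) (by fun_prop) (by fun_prop),
    pd_const_mul (g := fun y => y i) (by fun_prop), pd_const_mul (g := fun y => y j) (by fun_prop),
    pd_coord, pd_coord]

lemma pd_euler (hf : ContDiff ℝ 2 f) (k : Fin (n + 2)) :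
    pd (euler f) k x = pd f k x + ∑ i, x i * pd (pd f i) k x := by
  have := hf.differentiable_pd
  unfold euler
  have hterm : ∀ i, pd (fun y => y i * pd f i y) k x =
      (if i = k then 1 else 0) * pd f i x + x i * pd (pd f i) k x := fun i => by
    rw [pd_mul (by fun_prop) (by fun_prop), pd_coord]
  rw [pd_sum _ (fun i _ => by fun_prop)]
  simp [hterm, Finset.sum_add_distrib]

lemma euler_euler (hf : ContDiff ℝ 2 f) :
    euler (euler f) x = euler f x + ∑ i, ∑ j, x i * x j * pd (pd f j) i x := by
  simp only [euler, pd_euler hf, mul_add, Finset.sum_add_distrib, Finset.mul_sum, mul_assoc]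

lemma eps_mul_eps_mul_Xop_Xop (hf : ContDiff ℝ 2 f) (i j : Fin (n + 2)) :
    eps i * eps j * Xop i j (Xop i j f) x =
      (if i = j then 2 * (x i * pd f i x) else 0)
        + eps i * x i ^ 2 * (eps j * pd (pd f j) j x)
        + eps i * pd (pd f i) i x * (eps j * x j ^ 2)
        - x i * pd f i x - x j * pd f j x - 2 * (x i * x j * pd (pd f j) i x) := by
  rw [Xop, pd_Xop hf, pd_Xop hf, hf.pd_pd_comm i j]
  rcases eq_or_ne i j with rfl | hij
  · simp only [if_true]
    rcases eps_eq_one_or_neg_one i with hi | hi <;> simp only [hi] <;> ring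
  · simp only [if_neg hij, if_neg hij.symm, if_true]
    rcases eps_eq_one_or_neg_one i with hi | hi <;> rcases eps_eq_one_or_neg_one j with hj | hj <;>
      simp only [hi, hj] <;> ring

lemma sum_sum_eps_mul_eps_mul_Xop_Xop (hf : ContDiff ℝ 2 f) :
    ∑ i, ∑ j, eps i * eps j * Xop i j (Xop i j f) x =
      2 * (Qform x * box f x) - 2 * (n + 1) * euler f x
        - 2 * ∑ i, ∑ j, x i * x j * pd (pd f j) i x := by
  simp only [eps_mul_eps_mul_Xop_Xop hf, Finset.sum_add_distrib, Finset.sum_sub_distrib,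
    Finset.sum_ite_eq, Finset.mem_univ, if_true, Finset.sum_const, Finset.card_univ,
    Fintype.card_fin, nsmul_eq_mul, ← Finset.mul_sum, ← Finset.sum_mul]
  simp only [Qform, _root_.box, euler]
  push_cast
  ring

end Operators

theorem quadratic_casimir_identity (n : ℕ)
    (f : EuclideanSpace ℝ (Fin (n + 2)) → ℝ) (hf : ContDiff ℝ 2 f) :
    ∀ x : EuclideanSpace ℝ (Fin (n + 2)),
      (1 / 2 : ℝ) * ∑ i, ∑ j, eps i * eps j * Xop i j (Xop i j f) x =
        Qform x * box f x - (n : ℝ) * euler f x - euler (euler f) x := by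
  intro x
  rw [sum_sum_eps_mul_eps_mul_Xop_Xop hf, euler_euler hf]
  ring
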